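/- The function g(t) = -log(cos t)/t² is strictly increasing on (0, π/2). -/

import Mathlib

/-!
Write `g t = -log (cos t) / t ^ 2`. Its derivative is `h t / t ^ 3` with
`h t = t tan t + 2 log (cos t)`, so it suffices that `h > 0` on `(0, π/2)`.
Since `h 0 = 0` and `h' t = (t - sin t cos t) / cos² t = (2t - sin 2t) / (2 cos² t) > 0`,
`h` is strictly increasing on `[0, π/2)`.
-/

open Real Set

lemma cos_pos_of_mem_Ico {x : ℝ} (hx : x ∈ Ico 0 (π / 2)) : 0 < cos x :=
  cos_pos_of_mem_Ioo ⟨by linarith [pi_pos, hx.1], hx.2⟩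

lemma sin_mul_cos_lt_self {x : ℝ} (hx : 0 < x) : sin x * cos x < x := by
  have h := sin_lt (by linarith : 0 < 2 * x)
  rw [sin_two_mul] at h
  linarith

lemma hasDerivAt_log_cos {x : ℝ} (hx : cos x ≠ 0) :
    HasDerivAt (fun t => log (cos t)) (-tan x) x := by
  refine ((hasDerivAt_log hx).comp x (hasDerivAt_cos x)).congr_deriv ?_
  rw [tan_eq_sin_div_cos]
  field_simp

lemma hasDerivAt_mul_tan_add_two_mul_log_cos {x : ℝ} (hx : cos x ≠ 0) :
    HasDerivAt (fun t => t * tan t + 2 * log (cos t)) ((x - sin x * cos x) / cos x ^ 2) x := by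
  refine (((hasDerivAt_id x).mul (hasDerivAt_tan hx)).add
    ((hasDerivAt_log_cos hx).const_mul 2)).congr_deriv ?_
  rw [id, tan_eq_sin_div_cos]
  field_simp
  ring

lemma mul_tan_add_two_mul_log_cos_pos {x : ℝ} (hx : x ∈ Ioo 0 (π / 2)) :
    0 < x * tan x + 2 * log (cos x) := by
  have hmono : StrictMonoOn (fun t => t * tan t + 2 * log (cos t)) (Ico 0 (π / 2)) := by
    refine strictMonoOn_of_hasDerivWithinAt_pos (f' := fun t => (t - sin t * cos t) / cos t ^ 2)
      (convex_Ico _ _)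
      (fun t ht => ?_) (fun t ht => ?_) (fun t ht => ?_)
    · exact (hasDerivAt_mul_tan_add_two_mul_log_cos
        (cos_pos_of_mem_Ico ht).ne').continuousAt.continuousWithinAt
    · exact (hasDerivAt_mul_tan_add_two_mul_log_cos
        (cos_pos_of_mem_Ico (interior_subset ht)).ne').hasDerivWithinAt
    · rw [interior_Ico] at ht
      exact div_pos (by linarith [sin_mul_cos_lt_self ht.1])
        (pow_pos (cos_pos_of_mem_Ico (Ioo_subset_Ico_self ht)) 2)
  have h0 : (0 : ℝ) ∈ Ico 0 (π / 2) := ⟨le_rfl, by linarith [pi_pos]⟩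
  simpa using hmono h0 (Ioo_subset_Ico_self hx) hx.1

lemma hasDerivAt_neg_log_cos_div_sq {x : ℝ} (hx : x ≠ 0) (hcos : cos x ≠ 0) :
    HasDerivAt (fun t => -log (cos t) / t ^ 2) ((x * tan x + 2 * log (cos x)) / x ^ 3) x := by
  refine ((hasDerivAt_log_cos hcos).neg.div (hasDerivAt_pow 2 x) (pow_ne_zero 2 hx)).congr_deriv ?_
  simp only [Pi.neg_apply]
  field_simp
  ring

theorem stmt_17 :
    StrictMonoOn (fun t : ℝ => -Real.log (Real.cos t) / t^2) (Set.Ioo 0 (Real.pi/2)) := by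
  have hderiv : ∀ x ∈ Ioo 0 (π / 2), HasDerivAt (fun t : ℝ => -log (cos t) / t ^ 2)
      ((x * tan x + 2 * log (cos x)) / x ^ 3) x := fun x hx =>
    hasDerivAt_neg_log_cos_div_sq hx.1.ne' (cos_pos_of_mem_Ico (Ioo_subset_Ico_self hx)).ne'
  refine strictMonoOn_of_hasDerivWithinAt_pos (convex_Ioo _ _)
    (f' := fun x => (x * tan x + 2 * log (cos x)) / x ^ 3)
    (fun x hx => (hderiv x hx).continuousAt.continuousWithinAt) (fun x hx => ?_) (fun x hx => ?_)
  · rw [interior_Ioo] at hx ⊢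
    exact (hderiv x hx).hasDerivWithinAt
  · rw [interior_Ioo] at hx
    exact div_pos (mul_tan_add_two_mul_log_cos_pos hx) (pow_pos hx.1 3)
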